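/- Let d = 3 and b_λ = p⊗p⊗p + λ(p⊗q⊗q + q⊗p⊗q + q⊗q⊗p) with ‖p‖ = ‖q‖ = 1, ⟨p,q⟩ = 0, λ ≥ 0. For p_α = p + α q, the stationarity condition (Id ⊗ p_α ⊗ p_α)ᵀ b_λ = C p_α for some C ∈ ℝ is equivalent to 2λα/(1 + λα²) = α, whose real solutions are α = 0 if λ ≤ 1/2, and α ∈ {0, ±√((2λ−1)/λ)} if λ > 1/2. -/

import Mathlib

/-!
Contracting `b_λ` with `x ⊗ x` gives `(⟪p,x⟫² + λ⟪q,x⟫²) p + 2λ⟪p,x⟫⟪q,x⟫ q`; for `x = p + α q` this is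
`(1 + λα²) p + 2λα q`. Since `p, q` are linearly independent, it is a multiple of `p + α q` exactly when the
`q`-coefficient is `α` times the `p`-coefficient. That equation factors as `α (λα² - (2λ - 1)) = 0`, and for
`λ ≥ 0` the second factor has real roots only when `λ > 1/2`.
-/

open scoped BigOperators

/-- Elementary (rank-one) order-3 tensor `u ⊗ v ⊗ w` on `ℝⁿ ⊗ ℝⁿ ⊗ ℝⁿ`. -/
noncomputable def t3 {n : ℕ} (u v w : EuclideanSpace ℝ (Fin n)) :
    EuclideanSpace ℝ (Fin n × Fin n × Fin n) :=
  WithLp.toLp 2 (fun i : Fin n × Fin n × Fin n => u i.1 * v i.2.1 * w i.2.2)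

/-- The tensor `b_λ = p⊗p⊗p + λ(p⊗q⊗q + q⊗p⊗q + q⊗q⊗p)`. -/
noncomputable def bLam {n : ℕ} (p q : EuclideanSpace ℝ (Fin n)) (lam : ℝ) :
    EuclideanSpace ℝ (Fin n × Fin n × Fin n) :=
  t3 p p p + lam • (t3 p q q + t3 q p q + t3 q q p)

/-- Contraction of an order-3 tensor in the second and third modes:
`((Id ⊗ x ⊗ y)ᵀ b)_i = Σ_{j,k} b_{ijk} x_j y_k`. -/
noncomputable def contr23 {n : ℕ} (b : EuclideanSpace ℝ (Fin n × Fin n × Fin n))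
    (x y : EuclideanSpace ℝ (Fin n)) : EuclideanSpace ℝ (Fin n) :=
  WithLp.toLp 2 (fun i => ∑ j, ∑ k, b (i, j, k) * x j * y k)

open RealInnerProductSpace

section Contraction

variable {n : ℕ}

lemma contr23_add (b c : EuclideanSpace ℝ (Fin n × Fin n × Fin n))
    (x y : EuclideanSpace ℝ (Fin n)) :
    contr23 (b + c) x y = contr23 b x y + contr23 c x y := by
  ext i
  simp [contr23, add_mul, Finset.sum_add_distrib]

lemma contr23_smul (a : ℝ) (b : EuclideanSpace ℝ (Fin n × Fin n × Fin n))
    (x y : EuclideanSpace ℝ (Fin n)) :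
    contr23 (a • b) x y = a • contr23 b x y := by
  ext i
  simp [contr23, Finset.mul_sum, mul_assoc]

lemma contr23_t3 (u v w x y : EuclideanSpace ℝ (Fin n)) :
    contr23 (t3 u v w) x y = (⟪v, x⟫ * ⟪w, y⟫) • u := by
  ext i
  simp only [contr23, t3, PiLp.inner_apply, RCLike.inner_apply, conj_trivial, PiLp.toLp_apply,
    PiLp.smul_apply, smul_eq_mul]
  rw [Finset.sum_mul_sum, Finset.sum_mul]
  simp only [Finset.sum_mul]
  exact Finset.sum_congr rfl fun j _ => Finset.sum_congr rfl fun k _ => by ring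

lemma contr23_bLam_self (p q x : EuclideanSpace ℝ (Fin n)) (lam : ℝ) :
    contr23 (bLam p q lam) x x =
      (⟪p, x⟫ ^ 2 + lam * ⟪q, x⟫ ^ 2) • p + (2 * lam * ⟪p, x⟫ * ⟪q, x⟫) • q := by
  simp only [bLam, contr23_add, contr23_smul, contr23_t3, smul_add, smul_smul]
  module

end Contraction

lemma orthonormal_pair {E : Type*} [NormedAddCommGroup E] [InnerProductSpace ℝ E] {p q : E}
    (hp : ‖p‖ = 1) (hq : ‖q‖ = 1) (hpq : ⟪p, q⟫ = 0) : Orthonormal ℝ ![p, q] := by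
  rw [orthonormal_iff_ite]
  intro i j
  fin_cases i <;> fin_cases j <;>
    simp [hp, hq, hpq, real_inner_comm p q]

lemma exists_smul_add_eq_smul_iff {K V : Type*} [Field K] [AddCommGroup V] [Module K V]
    {p q : V} (h : LinearIndependent K ![p, q]) (a b α : K) :
    (∃ C : K, a • p + b • q = C • (p + α • q)) ↔ b = a * α := by
  constructor
  · rintro ⟨C, hC⟩
    have hzero : (a - C) • p + (b - C * α) • q = 0 := by
      linear_combination (norm := module) hC
    obtain ⟨ha, hb⟩ := LinearIndependent.pair_iff.1 h _ _ hzero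
    rw [sub_eq_zero.1 ha, sub_eq_zero.1 hb]
  · intro hb
    exact ⟨a, by rw [hb, smul_add, mul_smul]⟩

lemma mul_sq_eq_two_mul_sub_one_iff {lam α : ℝ} (hlam : 0 ≤ lam) (hα : α ≠ 0) :
    lam * α ^ 2 = 2 * lam - 1 ↔
      1 / 2 < lam ∧
        (α = Real.sqrt ((2 * lam - 1) / lam) ∨ α = -Real.sqrt ((2 * lam - 1) / lam)) := by
  constructor
  · intro h
    have hlam' : 1 / 2 < lam := by
      by_contra! hle
      have : lam * α ^ 2 = 0 := le_antisymm (by linarith) (by positivity)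
      have : lam = 1 / 2 := by linarith
      simp_all
    refine ⟨hlam', sq_eq_sq_iff_eq_or_eq_neg.1 ?_⟩
    rw [Real.sq_sqrt (div_nonneg (by linarith) hlam), eq_div_iff (by linarith), mul_comm, h]
  · rintro ⟨hlam', hα⟩
    have hsq : α ^ 2 = (2 * lam - 1) / lam := by
      rw [← Real.sq_sqrt (div_nonneg (by linarith) hlam), sq_eq_sq_iff_eq_or_eq_neg]
      exact hα
    rw [hsq]
    field_simp

/-- For `p_α = p + α q`, the stationarity condition `(Id ⊗ p_α ⊗ p_α)ᵀ b_λ = C p_α` is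
equivalent to `2λα = α(1 + λα²)`, whose real solutions are `α = 0` if `λ ≤ 1/2` and
`α ∈ {0, ±√((2λ−1)/λ)}` if `λ > 1/2`. -/
theorem stmt12 {n : ℕ} (p q : EuclideanSpace ℝ (Fin n))
    (hp : ‖p‖ = 1) (hq : ‖q‖ = 1) (hpq : (inner ℝ p q : ℝ) = 0)
    (lam : ℝ) (hlam : 0 ≤ lam) (α : ℝ) :
    ((∃ C : ℝ, contr23 (bLam p q lam) (p + α • q) (p + α • q) = C • (p + α • q)) ↔
        2 * lam * α = α * (1 + lam * α ^ 2)) ∧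
      (2 * lam * α = α * (1 + lam * α ^ 2) ↔
        (α = 0 ∨ (1 / 2 < lam ∧
          (α = Real.sqrt ((2 * lam - 1) / lam) ∨ α = -Real.sqrt ((2 * lam - 1) / lam))))) := by
  have hp_pα : ⟪p, p + α • q⟫ = 1 := by
    rw [inner_add_right, inner_smul_right, real_inner_self_eq_norm_sq, hp, hpq]; ring
  have hq_pα : ⟪q, p + α • q⟫ = α := by
    rw [inner_add_right, inner_smul_right, real_inner_self_eq_norm_sq, hq, real_inner_comm, hpq]
    ring
  refine ⟨?_, ?_⟩
  · rw [contr23_bLam_self, hp_pα, hq_pα,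
      exists_smul_add_eq_smul_iff (orthonormal_pair hp hq hpq).linearIndependent]
    ring_nf
  · have hfactor :
        2 * lam * α = α * (1 + lam * α ^ 2) ↔ α * (lam * α ^ 2 - (2 * lam - 1)) = 0 := by
      constructor <;> intro h <;> linear_combination -h
    rw [hfactor, mul_eq_zero, sub_eq_zero]
    rcases eq_or_ne α 0 with hα | hα
    · simp [hα]
    · simp only [hα, false_or]
      exact mul_sq_eq_two_mul_sub_one_iff hlam hα
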